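/- If R0 ≤ 1, then every steady state is disease-free: β* = 0, ε* = α* = ι* = 0, and e*(θ) = a*(θ) = i*(θ) = 0 for all θ ≥ 0, while S* = μN0/(p+μ) and V* = pμN0/((p+μ)(ζε+μ)). -/

import Mathlib

/-!
Integrating the steady-state densities against the coefficients gives
`α* = ε* ∫ k q π_E`, `ι* = ε* ∫ k (1-q) π_E + α* ∫ χ (1-ξ) π_A` and
`β* = α* ∫ β_A π_A + ι* ∫ β_I π_I`, hence `β* = ε* (R_A + R_I) = β* g(β*)`, where
`g(β) = (S* + (1-ε) V*) (R_A + R_I)` is `gfun` evaluated at the steady-state formulas for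
`S*, V*`. Now `g(0) = R₀`, and `g(β) = μ N0 (R_A + R_I) h(β)` with `h` positive and strictly
decreasing, so `R₀ ≤ 1` forces `g(β) < 1` for every `β > 0`. Thus `β* = 0`, and then every
infected quantity vanishes.
-/

open MeasureTheory Filter

noncomputable section

/-- Survival kernel of the exposed class: `π_E(θ) = exp(−∫₀^θ (k(τ)+μ) dτ)`. -/
def piE (μ : ℝ) (k : ℝ → ℝ) (θ : ℝ) : ℝ :=
  Real.exp (-(∫ τ in (0:ℝ)..θ, (k τ + μ)))

/-- Survival kernel of the asymptomatic class:
`π_A(θ) = exp(−∫₀^θ (γ_A ξ + χ(1−ξ) + μ) dτ)`. -/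
def piA (μ : ℝ) (γA ξ χ : ℝ → ℝ) (θ : ℝ) : ℝ :=
  Real.exp (-(∫ τ in (0:ℝ)..θ, (γA τ * ξ τ + χ τ * (1 - ξ τ) + μ)))

/-- Survival kernel of the symptomatic class: `π_I(θ) = exp(−∫₀^θ (γ_I(τ)+μ) dτ)`. -/
def piI (μ : ℝ) (γI : ℝ → ℝ) (θ : ℝ) : ℝ :=
  Real.exp (-(∫ τ in (0:ℝ)..θ, (γI τ + μ)))

/-- An essentially bounded measurable nonnegative coefficient on `ℝ≥0`
(element of `L∞(ℝ≥0; ℝ≥0)`). -/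
def CoeffBM (f : ℝ → ℝ) : Prop :=
  Measurable f ∧ (∃ C : ℝ, ∀ θ, 0 ≤ θ → f θ ≤ C) ∧ (∀ θ, 0 ≤ θ → 0 ≤ f θ)

/-- A measurable coefficient with values in `[0,1]` on `ℝ≥0`
(element of `L∞(ℝ≥0; [0,1])`). -/
def FracBM (f : ℝ → ℝ) : Prop :=
  Measurable f ∧ ∀ θ, 0 ≤ θ → f θ ∈ Set.Icc (0:ℝ) 1

/-- A bounded continuous nonnegative coefficient on `ℝ≥0`. -/
def CoeffBC (f : ℝ → ℝ) : Prop :=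
  Continuous f ∧ (∃ C : ℝ, ∀ θ, 0 ≤ θ → f θ ≤ C) ∧ (∀ θ, 0 ≤ θ → 0 ≤ f θ)

/-- A continuous coefficient with values in `[0,1]` on `ℝ≥0`. -/
def FracBC (f : ℝ → ℝ) : Prop :=
  Continuous f ∧ ∀ θ, 0 ≤ θ → f θ ∈ Set.Icc (0:ℝ) 1

/-- Variation-of-constants expression `S[b]` for the susceptible compartment. -/
def Ssol (μ N0 p S0 : ℝ) (b : ℝ → ℝ) (t : ℝ) : ℝ :=
  S0 * Real.exp (-(∫ s in (0:ℝ)..t, (p + b s + μ))) +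
    μ * N0 * ∫ s in (0:ℝ)..t, Real.exp (-(∫ τ in s..t, (p + b τ + μ)))

/-- Variation-of-constants expression `V[b]` for the vaccinated compartment. -/
def Vsol (μ N0 p ζ ε S0 V0 : ℝ) (b : ℝ → ℝ) (t : ℝ) : ℝ :=
  V0 * Real.exp (-(∫ s in (0:ℝ)..t, (ζ * ε + b s * (1 - ε) + μ))) +
    p * ∫ s in (0:ℝ)..t, Ssol μ N0 p S0 b s *
      Real.exp (-(∫ τ in s..t, (ζ * ε + b τ * (1 - ε) + μ)))

/-- The boundary value `ε̃(t) = β(t)·(S(t) + (1−ε)V(t))`. -/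
def epsTilde (μ N0 p ζ ε S0 V0 : ℝ) (β : ℝ → ℝ) (t : ℝ) : ℝ :=
  β t * (Ssol μ N0 p S0 β t + (1 - ε) * Vsol μ N0 p ζ ε S0 V0 β t)

/-- Age density along characteristics: initial datum `f0` transported below the
diagonal, boundary datum `bdry` transported above the diagonal, with survival
kernel `π`. -/
def dens (π f0 bdry : ℝ → ℝ) (t θ : ℝ) : ℝ :=
  if t < θ then f0 (θ - t) * π θ / π (θ - t) else bdry (t - θ) * π θ

/-- The Volterra integral system for the triple `(β, α, ι)` of boundary values. -/
def VolterraSystem (μ N0 p ζ ε S0 V0 : ℝ)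
    (βA βI k χ γA γI q ξ e0 a0 i0 β α ι : ℝ → ℝ) : Prop :=
  ContinuousOn β (Set.Ici 0) ∧ ContinuousOn α (Set.Ici 0) ∧ ContinuousOn ι (Set.Ici 0) ∧
    ∀ t, 0 ≤ t →
      β t = (∫ s in (0:ℝ)..t,
          (βA (t - s) * α s * piA μ γA ξ χ (t - s) +
            βI (t - s) * ι s * piI μ γI (t - s))) +
        (∫ s in Set.Ioi (0:ℝ),
          (βA (t + s) * a0 s * piA μ γA ξ χ (t + s) / piA μ γA ξ χ s +
            βI (t + s) * i0 s * piI μ γI (t + s) / piI μ γI s)) ∧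
      α t = (∫ s in (0:ℝ)..t,
          k (t - s) * q (t - s) * β s *
            (Ssol μ N0 p S0 β s + (1 - ε) * Vsol μ N0 p ζ ε S0 V0 β s) * piE μ k (t - s)) +
        (∫ s in Set.Ioi (0:ℝ),
          k (t + s) * q (t + s) * e0 s * piE μ k (t + s) / piE μ k s) ∧
      ι t = (∫ s in (0:ℝ)..t,
          (k (t - s) * (1 - q (t - s)) * β s *
              (Ssol μ N0 p S0 β s + (1 - ε) * Vsol μ N0 p ζ ε S0 V0 β s) * piE μ k (t - s) +
            χ (t - s) * (1 - ξ (t - s)) * α s * piA μ γA ξ χ (t - s))) +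
        (∫ s in Set.Ioi (0:ℝ),
          (k (t + s) * (1 - q (t + s)) * e0 s * piE μ k (t + s) / piE μ k s +
            χ (t + s) * (1 - ξ (t + s)) * a0 s * piA μ γA ξ χ (t + s) / piA μ γA ξ χ s))

/-- `R_A = (∫₀^∞ k q π_E)·(∫₀^∞ β_A π_A)`. -/
def RAdef (μ : ℝ) (βA k q γA ξ χ : ℝ → ℝ) : ℝ :=
  (∫ s in Set.Ioi (0:ℝ), k s * q s * piE μ k s) *
    (∫ s in Set.Ioi (0:ℝ), βA s * piA μ γA ξ χ s)

/-- `R_I = (∫₀^∞ k(1−q)π_E + (∫₀^∞ k q π_E)·(∫₀^∞ χ(1−ξ)π_A))·(∫₀^∞ β_I π_I)`. -/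
def RIdef (μ : ℝ) (βI k q χ ξ γA γI : ℝ → ℝ) : ℝ :=
  ((∫ s in Set.Ioi (0:ℝ), k s * (1 - q s) * piE μ k s) +
      (∫ s in Set.Ioi (0:ℝ), k s * q s * piE μ k s) *
        (∫ s in Set.Ioi (0:ℝ), χ s * (1 - ξ s) * piA μ γA ξ χ s)) *
    (∫ s in Set.Ioi (0:ℝ), βI s * piI μ γI s)

/-- The basic reproduction number `R₀`. -/
def R0def (μ N0 p ζ ε : ℝ) (βA βI k χ γA γI q ξ : ℝ → ℝ) : ℝ :=
  (μ * N0 / (p + μ)) * (1 + p * (1 - ε) / (ζ * ε + μ)) *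
    (RAdef μ βA k q γA ξ χ + RIdef μ βI k q χ ξ γA γI)

/-- A steady state of the age-structured SVEAIR problem. -/
def SteadyState (μ N0 p ζ ε : ℝ) (βA βI k χ γA γI q ξ : ℝ → ℝ)
    (Sst Vst βst εst αst ιst : ℝ) (est ast ist : ℝ → ℝ) : Prop :=
  0 ≤ Sst ∧ 0 ≤ Vst ∧ 0 ≤ βst ∧ 0 ≤ εst ∧ 0 ≤ αst ∧ 0 ≤ ιst ∧
    (∀ θ, 0 ≤ θ → 0 ≤ est θ) ∧ (∀ θ, 0 ≤ θ → 0 ≤ ast θ) ∧ (∀ θ, 0 ≤ θ → 0 ≤ ist θ) ∧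
    Sst = μ * N0 / (p + βst + μ) ∧
    Vst = p * Sst / (ζ * ε + βst * (1 - ε) + μ) ∧
    (∀ θ, 0 ≤ θ → est θ = εst * piE μ k θ) ∧
    (∀ θ, 0 ≤ θ → ast θ = αst * piA μ γA ξ χ θ) ∧
    (∀ θ, 0 ≤ θ → ist θ = ιst * piI μ γI θ) ∧
    εst = βst * (Sst + (1 - ε) * Vst) ∧
    αst = (∫ θ in Set.Ioi (0:ℝ), k θ * q θ * est θ) ∧
    ιst = (∫ θ in Set.Ioi (0:ℝ), (k θ * (1 - q θ) * est θ + χ θ * (1 - ξ θ) * ast θ)) ∧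
    βst = (∫ θ in Set.Ioi (0:ℝ), (βA θ * ast θ + βI θ * ist θ))

/-- The scalar function `g` whose fixed points characterize steady states. -/
def gfun (μ N0 p ζ ε RA RI β : ℝ) : ℝ :=
  (μ * N0 / (p + β + μ)) * (1 + p * (1 - ε) / (ζ * ε + β * (1 - ε) + μ)) * (RA + RI)

/-- The Lyapunov weight `f_I`. -/
def fIfun (μ M : ℝ) (βI γI : ℝ → ℝ) (θ : ℝ) : ℝ :=
  M * ∫ s in Set.Ioi θ, βI s * Real.exp (-(∫ τ in θ..s, (γI τ + μ)))

/-- The Lyapunov weight `f_A`. -/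
def fAfun (μ M : ℝ) (βA βI γA γI ξ χ : ℝ → ℝ) (θ : ℝ) : ℝ :=
  M * (∫ s in Set.Ioi θ,
      βA s * Real.exp (-(∫ τ in θ..s, (γA τ * ξ τ + χ τ * (1 - ξ τ) + μ)))) +
    fIfun μ M βI γI 0 * ∫ s in Set.Ioi θ,
      χ s * (1 - ξ s) * Real.exp (-(∫ τ in θ..s, (γA τ * ξ τ + χ τ * (1 - ξ τ) + μ)))

/-- The Lyapunov weight `f_E`. -/
def fEfun (μ M : ℝ) (βA βI k q γA γI ξ χ : ℝ → ℝ) (θ : ℝ) : ℝ :=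
  fAfun μ M βA βI γA γI ξ χ 0 *
      (∫ s in Set.Ioi θ, k s * q s * Real.exp (-(∫ τ in θ..s, (k τ + μ)))) +
    fIfun μ M βI γI 0 *
      ∫ s in Set.Ioi θ, k s * (1 - q s) * Real.exp (-(∫ τ in θ..s, (k τ + μ)))

open Set

theorem CoeffBM.add {f g : ℝ → ℝ} (hf : CoeffBM f) (hg : CoeffBM g) :
    CoeffBM fun θ => f θ + g θ := by
  obtain ⟨hfm, ⟨C, hfC⟩, hf0⟩ := hf
  obtain ⟨hgm, ⟨D, hgD⟩, hg0⟩ := hg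
  exact ⟨hfm.add hgm, ⟨C + D, fun θ hθ => add_le_add (hfC θ hθ) (hgD θ hθ)⟩,
    fun θ hθ => add_nonneg (hf0 θ hθ) (hg0 θ hθ)⟩

theorem CoeffBM.mul_frac {f q : ℝ → ℝ} (hf : CoeffBM f) (hq : FracBM q) :
    CoeffBM fun θ => f θ * q θ := by
  obtain ⟨hfm, ⟨C, hfC⟩, hf0⟩ := hf
  obtain ⟨hqm, hq01⟩ := hq
  refine ⟨hfm.mul hqm, ⟨C, fun θ hθ => ?_⟩, fun θ hθ => mul_nonneg (hf0 θ hθ) (hq01 θ hθ).1⟩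
  exact (mul_le_of_le_one_right (hf0 θ hθ) (hq01 θ hθ).2).trans (hfC θ hθ)

theorem FracBM.one_sub {q : ℝ → ℝ} (hq : FracBM q) : FracBM fun θ => 1 - q θ :=
  ⟨measurable_const.sub hq.1, fun θ hθ =>
    ⟨by linarith [(hq.2 θ hθ).2], by linarith [(hq.2 θ hθ).1]⟩⟩

theorem CoeffBM.intervalIntegrable {f : ℝ → ℝ} (hf : CoeffBM f) {θ : ℝ} (hθ : 0 ≤ θ) :
    IntervalIntegrable f volume 0 θ := by
  obtain ⟨hfm, ⟨C, hfC⟩, hf0⟩ := hf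
  rw [intervalIntegrable_iff_integrableOn_Ioc_of_le hθ]
  refine Measure.integrableOn_of_bounded (M := C) measure_Ioc_lt_top.ne
    hfm.aestronglyMeasurable ?_
  filter_upwards [ae_restrict_mem measurableSet_Ioc] with x hx
  rw [Real.norm_of_nonneg (hf0 x hx.1.le)]
  exact hfC x hx.1.le

theorem continuousOn_primitive_Ioi {g : ℝ → ℝ}
    (hg : ∀ θ, 0 ≤ θ → IntervalIntegrable g volume 0 θ) :
    ContinuousOn (fun θ => ∫ τ in 0..θ, g τ) (Ioi 0) := by
  intro x (hx : 0 < x)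
  have hint : IntervalIntegrable g volume (min 0 0) (max 0 (x + 1)) := by
    rw [min_self, max_eq_right (by linarith)]
    exact hg (x + 1) (by linarith)
  exact ((intervalIntegral.continuousWithinAt_primitive (measure_singleton x) hint).continuousAt
    (Icc_mem_nhds hx (lt_add_one x))).continuousWithinAt

theorem exp_neg_integral_le_exp_neg_mul {g : ℝ → ℝ} {m θ : ℝ} (hθ : 0 ≤ θ)
    (hg : IntervalIntegrable g volume 0 θ) (hgm : ∀ τ ∈ Icc 0 θ, m ≤ g τ) :
    Real.exp (-∫ τ in 0..θ, g τ) ≤ Real.exp (-(m * θ)) := by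
  rw [Real.exp_le_exp, neg_le_neg_iff]
  calc m * θ = ∫ _ in 0..θ, m := by simp [mul_comm]
    _ ≤ ∫ τ in 0..θ, g τ := intervalIntegral.integral_mono_on hθ intervalIntegrable_const hg hgm

theorem integrableOn_Ioi_mul_exp_neg_integral {c g : ℝ → ℝ} {m C : ℝ} (hm : 0 < m)
    (hg : ∀ θ, 0 ≤ θ → IntervalIntegrable g volume 0 θ) (hgm : ∀ θ, 0 ≤ θ → m ≤ g θ)
    (hc : AEStronglyMeasurable c (volume.restrict (Ioi 0))) (hcC : ∀ θ, 0 < θ → |c θ| ≤ C) :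
    IntegrableOn (fun θ => c θ * Real.exp (-∫ τ in 0..θ, g τ)) (Ioi 0) := by
  refine Integrable.mono' ((exp_neg_integrableOn_Ioi 0 hm).const_mul C)
    (hc.mul ((continuousOn_primitive_Ioi hg).neg.rexp.aestronglyMeasurable measurableSet_Ioi)) ?_
  filter_upwards [ae_restrict_mem measurableSet_Ioi] with θ hθ
  rw [norm_mul, Real.norm_eq_abs, Real.norm_of_nonneg (Real.exp_pos _).le, neg_mul]
  exact mul_le_mul (hcC θ hθ)
    (exp_neg_integral_le_exp_neg_mul hθ.le (hg θ hθ.le) fun τ hτ => hgm τ hτ.1)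
    (Real.exp_pos _).le ((abs_nonneg _).trans (hcC θ hθ))

theorem CoeffBM.integrableOn_mul_exp_neg_integral_add {c g : ℝ → ℝ} {μ : ℝ}
    (hc : CoeffBM c) (hg : CoeffBM g) (hμ : 0 < μ) :
    IntegrableOn (fun θ => c θ * Real.exp (-∫ τ in 0..θ, (g τ + μ))) (Ioi 0) := by
  obtain ⟨hcm, ⟨C, hcC⟩, hc0⟩ := hc
  refine integrableOn_Ioi_mul_exp_neg_integral hμ
    (fun θ hθ => (hg.intervalIntegrable hθ).add intervalIntegrable_const)
    (fun θ hθ => le_add_of_nonneg_left (hg.2.2 θ hθ)) hcm.aestronglyMeasurable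
    (C := C) fun θ hθ => ?_
  rw [abs_of_nonneg (hc0 θ hθ.le)]
  exact hcC θ hθ.le

theorem setIntegral_eq_mul_add_mul {X : Type*} [MeasurableSpace X] {ν : Measure X} {s : Set X}
    (hs : MeasurableSet s) {F f g : X → ℝ} {a b : ℝ} (hf : IntegrableOn f s ν)
    (hg : IntegrableOn g s ν) (hF : ∀ x ∈ s, F x = a * f x + b * g x) :
    ∫ x in s, F x ∂ν = a * ∫ x in s, f x ∂ν + b * ∫ x in s, g x ∂ν := by
  rw [setIntegral_congr_fun hs hF, integral_add (hf.const_mul a) (hg.const_mul b),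
    integral_const_mul, integral_const_mul]

theorem gfun_zero (μ N0 p ζ ε : ℝ) (βA βI k χ γA γI q ξ : ℝ → ℝ) :
    gfun μ N0 p ζ ε (RAdef μ βA k q γA ξ χ) (RIdef μ βI k q χ ξ γA γI) 0 =
      R0def μ N0 p ζ ε βA βI k χ γA γI q ξ := by
  simp [gfun, R0def]

theorem gfun_lt_one {μ N0 p ζ ε RA RI β : ℝ} (hμ : 0 < μ) (hp : 0 ≤ p) (hζ : 0 ≤ ζ)
    (hε : ε ∈ Icc (0 : ℝ) 1) (hβ : 0 < β) (h0 : gfun μ N0 p ζ ε RA RI 0 ≤ 1) :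
    gfun μ N0 p ζ ε RA RI β < 1 := by
  set h : ℝ → ℝ := fun b => (1 + p * (1 - ε) / (ζ * ε + b * (1 - ε) + μ)) / (p + b + μ)
  have hg : ∀ b, gfun μ N0 p ζ ε RA RI b = μ * N0 * (RA + RI) * h b := fun b => by
    simp only [gfun, h]; ring
  have h1ε : 0 ≤ 1 - ε := by linarith [hε.2]
  have hζε : 0 < ζ * ε + μ := add_pos_of_nonneg_of_pos (mul_nonneg hζ hε.1) hμ
  have hD : ζ * ε + μ ≤ ζ * ε + β * (1 - ε) + μ := by nlinarith [mul_nonneg hβ.le h1ε]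
  have hh_pos : 0 < h β := by
    have := div_nonneg (mul_nonneg hp h1ε) (hζε.le.trans hD)
    exact div_pos (by linarith) (by linarith)
  have hh_lt : h β < h 0 :=
    calc h β ≤ (1 + p * (1 - ε) / (ζ * ε + μ)) / (p + β + μ) := by
          simp only [h]; gcongr
      _ < (1 + p * (1 - ε) / (ζ * ε + μ)) / (p + μ) := by gcongr; linarith
      _ = h 0 := by simp [h]
  rw [hg] at h0 ⊢
  rcases le_or_gt (μ * N0 * (RA + RI)) 0 with hc | hc
  · linarith [mul_nonpos_of_nonpos_of_nonneg hc hh_pos.le]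
  · linarith [mul_lt_mul_of_pos_left hh_lt hc]

namespace SteadyState

variable {μ N0 p ζ ε : ℝ} {βA βI k χ γA γI q ξ : ℝ → ℝ} {Sst Vst βst εst αst ιst : ℝ}
  {est ast ist : ℝ → ℝ}

theorem alpha_eq
    (hss : SteadyState μ N0 p ζ ε βA βI k χ γA γI q ξ Sst Vst βst εst αst ιst est ast ist) :
    αst = εst * ∫ s in Ioi 0, k s * q s * piE μ k s := by
  obtain ⟨-, -, -, -, -, -, -, -, -, -, -, he, -, -, -, hα, -, -⟩ := hss
  rw [hα, ← integral_const_mul]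
  refine setIntegral_congr_fun measurableSet_Ioi fun θ hθ => ?_
  simp only [he θ (le_of_lt hθ)]
  ring

theorem iota_eq (hμ : 0 < μ) (hk : CoeffBM k) (hχ : CoeffBM χ) (hγA : CoeffBM γA)
    (hq : FracBM q) (hξ : FracBM ξ)
    (hss : SteadyState μ N0 p ζ ε βA βI k χ γA γI q ξ Sst Vst βst εst αst ιst est ast ist) :
    ιst = εst * (∫ s in Ioi 0, k s * (1 - q s) * piE μ k s) +
      αst * ∫ s in Ioi 0, χ s * (1 - ξ s) * piA μ γA ξ χ s := by
  obtain ⟨-, -, -, -, -, -, -, -, -, -, -, he, ha, -, -, -, hι, -⟩ := hss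
  rw [hι]
  refine setIntegral_eq_mul_add_mul measurableSet_Ioi
    ((hk.mul_frac hq.one_sub).integrableOn_mul_exp_neg_integral_add hk hμ)
    ((hχ.mul_frac hξ.one_sub).integrableOn_mul_exp_neg_integral_add
      ((hγA.mul_frac hξ).add (hχ.mul_frac hξ.one_sub)) hμ) fun θ hθ => ?_
  simp only [he θ (le_of_lt hθ), ha θ (le_of_lt hθ)]
  ring

theorem beta_eq (hμ : 0 < μ) (hβA : CoeffBM βA) (hβI : CoeffBM βI) (hχ : CoeffBM χ)
    (hγA : CoeffBM γA) (hγI : CoeffBM γI) (hξ : FracBM ξ)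
    (hss : SteadyState μ N0 p ζ ε βA βI k χ γA γI q ξ Sst Vst βst εst αst ιst est ast ist) :
    βst = αst * (∫ s in Ioi 0, βA s * piA μ γA ξ χ s) +
      ιst * ∫ s in Ioi 0, βI s * piI μ γI s := by
  obtain ⟨-, -, -, -, -, -, -, -, -, -, -, -, ha, hi, -, -, -, hβ⟩ := hss
  rw [hβ]
  refine setIntegral_eq_mul_add_mul measurableSet_Ioi
    (hβA.integrableOn_mul_exp_neg_integral_add
      ((hγA.mul_frac hξ).add (hχ.mul_frac hξ.one_sub)) hμ)
    (hβI.integrableOn_mul_exp_neg_integral_add hγI hμ) fun θ hθ => ?_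
  simp only [ha θ (le_of_lt hθ), hi θ (le_of_lt hθ)]
  ring

theorem beta_eq_mul_gfun (hμ : 0 < μ) (hβA : CoeffBM βA) (hβI : CoeffBM βI) (hk : CoeffBM k)
    (hχ : CoeffBM χ) (hγA : CoeffBM γA) (hγI : CoeffBM γI) (hq : FracBM q) (hξ : FracBM ξ)
    (hss : SteadyState μ N0 p ζ ε βA βI k χ γA γI q ξ Sst Vst βst εst αst ιst est ast ist) :
    βst = βst * gfun μ N0 p ζ ε (RAdef μ βA k q γA ξ χ) (RIdef μ βI k q χ ξ γA γI) βst := by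
  have hβε : βst = εst * (RAdef μ βA k q γA ξ χ + RIdef μ βI k q χ ξ γA γI) := by
    rw [hss.beta_eq hμ hβA hβI hχ hγA hγI hξ, hss.iota_eq hμ hk hχ hγA hq hξ, hss.alpha_eq,
      RAdef, RIdef]
    ring
  obtain ⟨-, -, -, -, -, -, -, -, -, hS, hV, -, -, -, hε, -, -, -⟩ := hss
  calc βst = εst * (RAdef μ βA k q γA ξ χ + RIdef μ βI k q χ ξ γA γI) := hβε
    _ = βst * ((Sst + (1 - ε) * Vst) *
        (RAdef μ βA k q γA ξ χ + RIdef μ βI k q χ ξ γA γI)) := by rw [hε]; ring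
    _ = _ := by rw [gfun, hV, hS]; ring

theorem disease_free_of_beta_eq_zero
    (hss : SteadyState μ N0 p ζ ε βA βI k χ γA γI q ξ Sst Vst βst εst αst ιst est ast ist)
    (hβ : βst = 0) :
    βst = 0 ∧ εst = 0 ∧ αst = 0 ∧ ιst = 0 ∧
      (∀ θ, 0 ≤ θ → est θ = 0 ∧ ast θ = 0 ∧ ist θ = 0) ∧
      Sst = μ * N0 / (p + μ) ∧
      Vst = p * μ * N0 / ((p + μ) * (ζ * ε + μ)) := by
  obtain ⟨-, -, -, -, -, -, -, -, -, hS, hV, he, ha, hi, hε, hα, hι, -⟩ := hss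
  have hε0 : εst = 0 := by rw [hε, hβ, zero_mul]
  have he0 : ∀ θ, 0 ≤ θ → est θ = 0 := fun θ hθ => by rw [he θ hθ, hε0, zero_mul]
  have hα0 : αst = 0 := by
    rw [hα]
    refine setIntegral_eq_zero_of_forall_eq_zero fun θ hθ => ?_
    simp [he0 θ (le_of_lt hθ)]
  have ha0 : ∀ θ, 0 ≤ θ → ast θ = 0 := fun θ hθ => by rw [ha θ hθ, hα0, zero_mul]
  have hι0 : ιst = 0 := by
    rw [hι]
    refine setIntegral_eq_zero_of_forall_eq_zero fun θ hθ => ?_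
    simp [he0 θ (le_of_lt hθ), ha0 θ (le_of_lt hθ)]
  refine ⟨hβ, hε0, hα0, hι0, fun θ hθ => ⟨he0 θ hθ, ha0 θ hθ, ?_⟩, ?_, ?_⟩
  · rw [hi θ hθ, hι0, zero_mul]
  · rw [hS, hβ, add_zero]
  · rw [hV, hS, hβ, zero_mul, add_zero, add_zero, mul_div_assoc', div_div, mul_assoc]

end SteadyState

theorem steady_state_disease_free_of_R0_le_one_general
    (μ N0 p ζ ε : ℝ) (βA βI k χ γA γI q ξ : ℝ → ℝ)
    (hμ : 0 < μ) (hp : 0 ≤ p) (hζ : 0 ≤ ζ) (hε : ε ∈ Set.Icc (0:ℝ) 1)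
    (hβA : CoeffBM βA) (hβI : CoeffBM βI) (hk : CoeffBM k) (hχ : CoeffBM χ)
    (hγA : CoeffBM γA) (hγI : CoeffBM γI) (hq : FracBM q) (hξ : FracBM ξ)
    (hR0 : R0def μ N0 p ζ ε βA βI k χ γA γI q ξ ≤ 1)
    (Sst Vst βst εst αst ιst : ℝ) (est ast ist : ℝ → ℝ)
    (hss : SteadyState μ N0 p ζ ε βA βI k χ γA γI q ξ Sst Vst βst εst αst ιst est ast ist) :
    βst = 0 ∧ εst = 0 ∧ αst = 0 ∧ ιst = 0 ∧
      (∀ θ, 0 ≤ θ → est θ = 0 ∧ ast θ = 0 ∧ ist θ = 0) ∧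
      Sst = μ * N0 / (p + μ) ∧
      Vst = p * μ * N0 / ((p + μ) * (ζ * ε + μ)) := by
  refine hss.disease_free_of_beta_eq_zero (by_contra fun hβ => ?_)
  have hβpos : 0 < βst := hss.2.2.1.lt_of_ne' hβ
  have hg_eq : gfun μ N0 p ζ ε (RAdef μ βA k q γA ξ χ) (RIdef μ βI k q χ ξ γA γI) βst = 1 :=
    (mul_eq_left₀ hβ).mp (hss.beta_eq_mul_gfun hμ hβA hβI hk hχ hγA hγI hq hξ).symm
  have hg_lt := gfun_lt_one hμ hp hζ hε hβpos
    ((gfun_zero μ N0 p ζ ε βA βI k χ γA γI q ξ).trans_le hR0)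
  exact hg_lt.ne hg_eq

/-- If `R₀ ≤ 1`, then every steady state is disease-free:
`β* = ε* = α* = ι* = 0`, the densities `e*, a*, i*` vanish identically on
`ℝ≥0`, while `S* = μN0/(p+μ)` and `V* = pμN0/((p+μ)(ζε+μ))`. -/
theorem steady_state_disease_free_of_R0_le_one
    (μ N0 p ζ ε : ℝ) (βA βI k χ γA γI q ξ : ℝ → ℝ)
    (hμ : 0 < μ) (hN0 : 0 ≤ N0) (hp : 0 ≤ p) (hζ : 0 ≤ ζ) (hε : ε ∈ Set.Icc (0:ℝ) 1)
    (hβA : CoeffBM βA) (hβI : CoeffBM βI) (hk : CoeffBM k) (hχ : CoeffBM χ)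
    (hγA : CoeffBM γA) (hγI : CoeffBM γI) (hq : FracBM q) (hξ : FracBM ξ)
    (hR0 : R0def μ N0 p ζ ε βA βI k χ γA γI q ξ ≤ 1)
    (Sst Vst βst εst αst ιst : ℝ) (est ast ist : ℝ → ℝ)
    (hss : SteadyState μ N0 p ζ ε βA βI k χ γA γI q ξ Sst Vst βst εst αst ιst est ast ist) :
    βst = 0 ∧ εst = 0 ∧ αst = 0 ∧ ιst = 0 ∧
      (∀ θ, 0 ≤ θ → est θ = 0 ∧ ast θ = 0 ∧ ist θ = 0) ∧
      Sst = μ * N0 / (p + μ) ∧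
      Vst = p * μ * N0 / ((p + μ) * (ζ * ε + μ)) :=
  steady_state_disease_free_of_R0_le_one_general μ N0 p ζ ε βA βI k χ γA γI q ξ hμ hp hζ hε hβA hβI
    hk hχ hγA hγI hq hξ hR0 Sst Vst βst εst αst ιst est ast ist hss
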